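/- arXiv:2505.20335 — 6 statements merged into one kernel-verified Lean document; each statement's English description precedes it below -/
import Mathlib

section
/- The top-p soft Bellman operator B_p^π has a unique fixed point: there exists exactly one function Q̄ : S × A_p → ℝ such that Q̄(s,a) = (B_p^π Q̄)(s,a) for all s ∈ S and a ∈ A_p. -/
/-- The top-p soft Bellman operator `B_p^π` has a unique fixed point:
there exists exactly one function `Q̄ : S × A_p → ℝ` such that
`Q̄(s,a) = (B_p^π Q̄)(s,a)` for all `s ∈ S` and `a ∈ A_p`. -/
theorem topP_soft_bellman_unique_fixed_point
    {S A : Type} [Fintype S] [Fintype A] [Nonempty S] [Nonempty A]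
    (P : S → A → S → ℝ)
    (hP0 : ∀ s a s', 0 ≤ P s a s')
    (hP1 : ∀ s a, ∑ s', P s a s' = 1)
    (r : S → A → ℝ) (γ : ℝ) (hγ0 : 0 ≤ γ) (hγ1 : γ < 1)
    (π : S → A → ℝ)
    (hπ0 : ∀ s a, 0 ≤ π s a) (hπ1 : ∀ s, ∑ a, π s a = 1)
    (Ap : Finset A) (hAp : Ap.Nonempty)
    (hπpos : ∀ s, ∀ a ∈ Ap, 0 < π s a)
    (proj : S → A → ℝ)
    (hproj : ∀ s, ∀ a ∈ Ap, proj s a = π s a / ∑ b ∈ Ap, π s b) :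
    ∃! Qbar : S → {a : A // a ∈ Ap} → ℝ,
      ∀ (s : S) (a : {a : A // a ∈ Ap}),
        Qbar s a = r s a.1 + γ * ∑ s', P s a.1 s' *
          ∑ a' ∈ Ap.attach, proj s' a'.1 * (Qbar s' a' - Real.log (proj s' a'.1)) := by
  classical
  set K : NNReal := ⟨γ, hγ0⟩ with hKdef
  set F : (S → {a : A // a ∈ Ap} → ℝ) → (S → {a : A // a ∈ Ap} → ℝ) :=
    fun Q s a => r s a.1 + γ * ∑ s', P s a.1 s' *
      ∑ a' ∈ Ap.attach, proj s' a'.1 * (Q s' a' - Real.log (proj s' a'.1)) with hFdef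
  have hsumπ : ∀ s, 0 < ∑ b ∈ Ap, π s b :=
    fun s => Finset.sum_pos (fun b hb => hπpos s b hb) hAp
  have hproj0 : ∀ s, ∀ a ∈ Ap, 0 ≤ proj s a := by
    intro s a ha
    rw [hproj s a ha]
    exact div_nonneg (hπ0 s a) (hsumπ s).le
  have hproj1 : ∀ s, ∑ a ∈ Ap, proj s a = 1 := by
    intro s
    rw [Finset.sum_congr rfl (fun a ha => hproj s a ha), ← Finset.sum_div,
      div_self (hsumπ s).ne']
  have hlip : LipschitzWith K F := by
    apply LipschitzWith.of_dist_le_mul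
    intro Q Q'
    have hD : (0:ℝ) ≤ dist Q Q' := dist_nonneg
    have hKD : (0:ℝ) ≤ (K:ℝ) * dist Q Q' := mul_nonneg hγ0 hD
    rw [dist_pi_le_iff hKD]
    intro s
    rw [dist_pi_le_iff hKD]
    intro a
    rw [Real.dist_eq]
    have key : F Q s a - F Q' s a
        = γ * ∑ s', P s a.1 s' * ∑ a' ∈ Ap.attach,
            proj s' a'.1 * (Q s' a' - Q' s' a') := by
      simp only [hFdef]
      rw [add_sub_add_left_eq_sub, ← mul_sub, ← Finset.sum_sub_distrib]
      congr 1
      apply Finset.sum_congr rfl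
      intro s' _
      rw [← mul_sub, ← Finset.sum_sub_distrib]
      congr 1
      apply Finset.sum_congr rfl
      intro a' _
      ring
    rw [key, abs_mul, abs_of_nonneg hγ0]
    apply mul_le_mul_of_nonneg_left _ hγ0
    have hinner : ∀ s', |∑ a' ∈ Ap.attach, proj s' a'.1 * (Q s' a' - Q' s' a')|
        ≤ dist Q Q' := by
      intro s'
      calc |∑ a' ∈ Ap.attach, proj s' a'.1 * (Q s' a' - Q' s' a')|
          ≤ ∑ a' ∈ Ap.attach, |proj s' a'.1 * (Q s' a' - Q' s' a')| :=
            Finset.abs_sum_le_sum_abs _ _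
        _ ≤ ∑ a' ∈ Ap.attach, proj s' a'.1 * dist Q Q' := by
            apply Finset.sum_le_sum
            intro a' _
            rw [abs_mul, abs_of_nonneg (hproj0 s' a'.1 a'.2)]
            apply mul_le_mul_of_nonneg_left _ (hproj0 s' a'.1 a'.2)
            calc |Q s' a' - Q' s' a'| = dist (Q s' a') (Q' s' a') := (Real.dist_eq _ _).symm
              _ ≤ dist (Q s') (Q' s') := dist_le_pi_dist _ _ _
              _ ≤ dist Q Q' := dist_le_pi_dist _ _ _
        _ = (∑ a' ∈ Ap.attach, proj s' a'.1) * dist Q Q' := by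
            rw [Finset.sum_mul]
        _ = dist Q Q' := by
            rw [Finset.sum_attach Ap (fun a => proj s' a), hproj1 s', one_mul]
    calc |∑ s', P s a.1 s' * ∑ a' ∈ Ap.attach, proj s' a'.1 * (Q s' a' - Q' s' a')|
        ≤ ∑ s', |P s a.1 s' * ∑ a' ∈ Ap.attach, proj s' a'.1 * (Q s' a' - Q' s' a')| :=
          Finset.abs_sum_le_sum_abs _ _
      _ ≤ ∑ s', P s a.1 s' * dist Q Q' := by
          apply Finset.sum_le_sum
          intro s' _
          rw [abs_mul, abs_of_nonneg (hP0 s a.1 s')]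
          exact mul_le_mul_of_nonneg_left (hinner s') (hP0 s a.1 s')
      _ = dist Q Q' := by rw [← Finset.sum_mul, hP1 s a.1, one_mul]
  have hK1 : K < 1 := by
    rw [← NNReal.coe_lt_coe]
    exact hγ1
  have hcontr : ContractingWith K F := ⟨hK1, hlip⟩
  refine ⟨ContractingWith.fixedPoint F hcontr, ?_, ?_⟩
  · intro s a
    conv_lhs => rw [← hcontr.fixedPoint_isFixedPt]
  · intro Q hQ
    apply hcontr.fixedPoint_unique
    funext s a
    exact (hQ s a).symm
end

section
/- Projected soft value of the softmax policy: let A be a nonempty finite set, Q : A → ℝ, and π(a) = exp(Q(a))/Σ_{b∈A} exp(Q(b)) the softmax distribution. If A_p ⊆ A is nonempty with Σ_{a∈A_p} π(a) = p > 0, and proj_p(π)(a) = π(a)/p for a ∈ A_p, then Σ_{a∈A_p} proj_p(π)(a)·(Q(a) − log proj_p(π)(a)) = log(Σ_{a∈A} exp(Q(a))) + log p. In particular the projected soft value differs from the full soft value log Σ_{a∈A} exp(Q(a)) by exactly log p. -/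
/-- Projected soft value of the softmax policy: if `π` is the softmax of
`Q`, `A_p ⊆ A` has total mass `p = Σ_{a∈A_p} π(a) > 0`, and `proj_p(π)(a) = π(a)/p`
on `A_p`, then `Σ_{a∈A_p} proj_p(π)(a)·(Q(a) − log proj_p(π)(a))
= log(Σ_{a∈A} exp(Q(a))) + log p`. -/
theorem projected_soft_value_of_softmax
    {A : Type} [Fintype A] [Nonempty A]
    (Q : A → ℝ) (π : A → ℝ)
    (hπ : ∀ a, π a = Real.exp (Q a) / ∑ b, Real.exp (Q b))
    (Ap : Finset A) (hAp : Ap.Nonempty)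
    (p : ℝ) (hp : ∑ a ∈ Ap, π a = p) (hppos : 0 < p)
    (proj : A → ℝ) (hproj : ∀ a ∈ Ap, proj a = π a / p) :
    ∑ a ∈ Ap, proj a * (Q a - Real.log (proj a))
      = Real.log (∑ a, Real.exp (Q a)) + Real.log p := by
  have hZ : 0 < ∑ b, Real.exp (Q b) :=
    Finset.sum_pos (fun b _ => Real.exp_pos _) Finset.univ_nonempty
  set Z := ∑ b, Real.exp (Q b) with hZdef
  have hlog : ∀ a ∈ Ap, Q a - Real.log (proj a) = Real.log Z + Real.log p := by
    intro a ha
    have hpa : proj a = Real.exp (Q a) / (Z * p) := by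
      rw [hproj a ha, hπ a, div_div]
    rw [hpa, Real.log_div (Real.exp_ne_zero _) (by positivity),
      Real.log_exp, Real.log_mul (ne_of_gt hZ) (ne_of_gt hppos)]
    ring
  have hsum : ∑ a ∈ Ap, proj a = 1 := by
    have : ∑ a ∈ Ap, proj a = (∑ a ∈ Ap, π a) / p := by
      rw [Finset.sum_div]
      exact Finset.sum_congr rfl hproj
    rw [this, hp, div_self (ne_of_gt hppos)]
  calc ∑ a ∈ Ap, proj a * (Q a - Real.log (proj a))
      = ∑ a ∈ Ap, proj a * (Real.log Z + Real.log p) :=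
        Finset.sum_congr rfl (fun a ha => by rw [hlog a ha])
    _ = (∑ a ∈ Ap, proj a) * (Real.log Z + Real.log p) := by
        rw [Finset.sum_mul]
    _ = Real.log Z + Real.log p := by rw [hsum, one_mul]
end

section
/- Proposition 2 (bounded gap for the projected teacher policy): let Q̄^{proj_p π⋆} : S × A_p^⋆ → ℝ be the fixed point of the top-p soft Bellman operator B_p^{proj_p π⋆} associated with the projected policy proj_p(π⋆). Then ‖Q⋆ − Q̄^{proj_p π⋆}‖_{∞,A_p^⋆} = max_{s∈S} max_{a∈A_p^⋆} |Q⋆(s,a) − Q̄^{proj_p π⋆}(s,a)| ≤ κ(p), where κ(p) = −(γ/(1−γ)) log p. -/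
/-- Proposition 2, bounded gap for the projected teacher policy:
if `Q̄^{proj_p π⋆}` is the fixed point of the top-p soft Bellman operator
`B_p^{proj_p π⋆}`, then `‖Q⋆ − Q̄^{proj_p π⋆}‖_{∞,A_p^⋆} ≤ κ(p) = −(γ/(1−γ)) log p`. -/
theorem projected_teacher_gap_bound
    {S A : Type} [Fintype S] [Fintype A] [Nonempty S] [Nonempty A]
    (P : S → A → S → ℝ)
    (hP0 : ∀ s a s', 0 ≤ P s a s')
    (hP1 : ∀ s a, ∑ s', P s a s' = 1)
    (r : S → A → ℝ) (γ : ℝ) (hγ0 : 0 ≤ γ) (hγ1 : γ < 1)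
    (Qstar : S → A → ℝ)
    (hQstar : ∀ s a, Qstar s a = r s a + γ * ∑ s', P s a s' *
        Real.log (∑ a', Real.exp (Qstar s' a')))
    (πstar : S → A → ℝ)
    (hπstar : ∀ s a, πstar s a = Real.exp (Qstar s a) / ∑ b, Real.exp (Qstar s b))
    (p : ℝ) (hp0 : 0 < p) (hp1 : p ≤ 1)
    (Ap : Finset A) (hAp : Ap.Nonempty)
    (hmass : ∀ s, ∑ a ∈ Ap, πstar s a = p)
    (htop : ∀ s, ∀ a ∈ Ap, ∀ b ∉ Ap, πstar s b ≤ πstar s a)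
    (proj : S → A → ℝ)
    (hproj : ∀ s, ∀ a ∈ Ap, proj s a = πstar s a / p)
    (Qbar : S → A → ℝ)
    (hQbar : ∀ s, ∀ a ∈ Ap, Qbar s a = r s a + γ * ∑ s', P s a s' *
        ∑ a' ∈ Ap, proj s' a' * (Qbar s' a' - Real.log (proj s' a'))) :
    (Finset.univ.sup' Finset.univ_nonempty fun s =>
        Ap.sup' hAp fun a => |Qstar s a - Qbar s a|)
      ≤ -(γ / (1 - γ)) * Real.log p := by
  set Z : S → ℝ := fun s => ∑ b, Real.exp (Qstar s b) with hZ
  have hZpos : ∀ s, 0 < Z s := fun s =>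
    Finset.sum_pos (fun b _ => Real.exp_pos _) Finset.univ_nonempty
  have hπpos : ∀ s a, 0 < πstar s a := by
    intro s a; rw [hπstar]; exact div_pos (Real.exp_pos _) (hZpos s)
  have hprojpos : ∀ s, ∀ a ∈ Ap, 0 < proj s a := by
    intro s a ha; rw [hproj s a ha]; exact div_pos (hπpos s a) hp0
  have hprojsum : ∀ s, ∑ a ∈ Ap, proj s a = 1 := by
    intro s
    rw [Finset.sum_congr rfl (fun a ha => hproj s a ha), ← Finset.sum_div, hmass,
      div_self hp0.ne']
  have hlogproj : ∀ s, ∀ a ∈ Ap,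
      Real.log (proj s a) = Qstar s a - Real.log (Z s) - Real.log p := by
    intro s a ha
    rw [hproj s a ha, hπstar, Real.log_div (div_pos (Real.exp_pos _) (hZpos s)).ne' hp0.ne',
      Real.log_div (Real.exp_pos _).ne' (hZpos s).ne', Real.log_exp]
  have hlogp : Real.log p ≤ 0 := Real.log_nonpos hp0.le hp1
  set M : ℝ := Finset.univ.sup' Finset.univ_nonempty fun s =>
        Ap.sup' hAp fun a => |Qstar s a - Qbar s a| with hM
  have hMle : ∀ s, ∀ a ∈ Ap, |Qstar s a - Qbar s a| ≤ M := by
    intro s a ha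
    exact le_trans (Finset.le_sup' (fun a => |Qstar s a - Qbar s a|) ha)
      (Finset.le_sup' (fun s => Ap.sup' hAp fun a => |Qstar s a - Qbar s a|)
        (Finset.mem_univ s))
  -- inner identity
  have hinner : ∀ s',
      (∑ a' ∈ Ap, proj s' a' * (Qbar s' a' - Real.log (proj s' a')))
        = Real.log (Z s') + Real.log p
          + ∑ a' ∈ Ap, proj s' a' * (Qbar s' a' - Qstar s' a') := by
    intro s'
    have : ∀ a' ∈ Ap, proj s' a' * (Qbar s' a' - Real.log (proj s' a'))
        = proj s' a' * (Real.log (Z s') + Real.log p)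
          + proj s' a' * (Qbar s' a' - Qstar s' a') := by
      intro a' ha'
      rw [hlogproj s' a' ha']; ring
    rw [Finset.sum_congr rfl this, Finset.sum_add_distrib, ← Finset.sum_mul, hprojsum, one_mul]
  -- key identity
  have hkey : ∀ s, ∀ a ∈ Ap,
      Qstar s a - Qbar s a
        = γ * ∑ s', P s a s' *
            (-Real.log p + ∑ a' ∈ Ap, proj s' a' * (Qstar s' a' - Qbar s' a')) := by
    intro s a ha
    rw [hQstar s a, hQbar s a ha]
    have h1 : ∀ s' : S, P s a s' * Real.log (Z s')
        - P s a s' * (∑ a' ∈ Ap, proj s' a' * (Qbar s' a' - Real.log (proj s' a')))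
        = P s a s' * (-Real.log p + ∑ a' ∈ Ap, proj s' a' * (Qstar s' a' - Qbar s' a')) := by
      intro s'
      rw [hinner s']
      have h2 : ∑ a' ∈ Ap, proj s' a' * (Qbar s' a' - Qstar s' a')
          = -∑ a' ∈ Ap, proj s' a' * (Qstar s' a' - Qbar s' a') := by
        rw [← Finset.sum_neg_distrib]
        exact Finset.sum_congr rfl fun a' _ => by ring
      rw [h2]; ring
    have : (∑ s', P s a s' * Real.log (Z s'))
        - (∑ s', P s a s' * ∑ a' ∈ Ap, proj s' a' * (Qbar s' a' - Real.log (proj s' a')))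
        = ∑ s', P s a s' *
            (-Real.log p + ∑ a' ∈ Ap, proj s' a' * (Qstar s' a' - Qbar s' a')) := by
      rw [← Finset.sum_sub_distrib]
      exact Finset.sum_congr rfl fun s' _ => h1 s'
    rw [← this]; ring
  -- bound
  have hbound : ∀ s, ∀ a ∈ Ap, |Qstar s a - Qbar s a| ≤ γ * (M - Real.log p) := by
    intro s a ha
    rw [hkey s a ha, abs_mul, abs_of_nonneg hγ0]
    have habs : |∑ s', P s a s' *
        (-Real.log p + ∑ a' ∈ Ap, proj s' a' * (Qstar s' a' - Qbar s' a'))|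
        ≤ M - Real.log p := by
      calc |∑ s', P s a s' * (-Real.log p + ∑ a' ∈ Ap, proj s' a' * (Qstar s' a' - Qbar s' a'))|
          ≤ ∑ s', |P s a s' * (-Real.log p + ∑ a' ∈ Ap, proj s' a' * (Qstar s' a' - Qbar s' a'))| :=
            Finset.abs_sum_le_sum_abs _ _
        _ ≤ ∑ s', P s a s' * (M - Real.log p) := by
            apply Finset.sum_le_sum
            intro s' _
            rw [abs_mul, abs_of_nonneg (hP0 s a s')]
            apply mul_le_mul_of_nonneg_left _ (hP0 s a s')
            calc |(-Real.log p + ∑ a' ∈ Ap, proj s' a' * (Qstar s' a' - Qbar s' a'))|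
                ≤ |(-Real.log p)| + |∑ a' ∈ Ap, proj s' a' * (Qstar s' a' - Qbar s' a')| :=
                  abs_add_le _ _
              _ ≤ (-Real.log p) + M := by
                  apply add_le_add
                  · rw [abs_of_nonneg (by linarith)]
                  · calc |∑ a' ∈ Ap, proj s' a' * (Qstar s' a' - Qbar s' a')|
                        ≤ ∑ a' ∈ Ap, |proj s' a' * (Qstar s' a' - Qbar s' a')| :=
                          Finset.abs_sum_le_sum_abs _ _
                      _ ≤ ∑ a' ∈ Ap, proj s' a' * M := by
                          apply Finset.sum_le_sum
                          intro a' ha'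
                          rw [abs_mul, abs_of_nonneg (hprojpos s' a' ha').le]
                          exact mul_le_mul_of_nonneg_left (hMle s' a' ha')
                            (hprojpos s' a' ha').le
                      _ = M := by rw [← Finset.sum_mul, hprojsum, one_mul]
              _ = M - Real.log p := by ring
        _ = M - Real.log p := by rw [← Finset.sum_mul, hP1, one_mul]
    exact mul_le_mul_of_nonneg_left habs hγ0
  have hMbound : M ≤ γ * (M - Real.log p) := by
    rw [hM]
    apply Finset.sup'_le
    intro s _
    apply Finset.sup'_le
    intro a ha
    exact hbound s a ha
  have h1γ : (0:ℝ) < 1 - γ := by linarith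
  have : -(γ / (1 - γ)) * Real.log p = (γ * (-Real.log p)) / (1 - γ) := by
    field_simp
  rw [this, le_div_iff₀ h1γ]
  nlinarith [hMbound]
end

section
/- Proposition 3 (sandwich condition): let Q̄^{proj_p π⋆} : S × A_p^⋆ → ℝ be the fixed point of the top-p soft Bellman operator B_p^{proj_p π⋆} associated with the projected policy proj_p(π⋆), and let Q̄⋆_p : S × A_p^⋆ → ℝ be the fixed point of the top-p soft Bellman optimality operator. Then Q̄^{proj_p π⋆}(s,a) ≤ Q̄⋆_p(s,a) ≤ Q⋆(s,a) for all s ∈ S and a ∈ A_p^⋆. -/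
lemma wsum_le {S : Type} [Fintype S] (w d : S → ℝ) (M : ℝ)
    (hw : ∀ s, 0 ≤ w s) (h1 : ∑ s, w s = 1) (hd : ∀ s, d s ≤ M) :
    ∑ s, w s * d s ≤ M := by
  calc ∑ s, w s * d s ≤ ∑ s, w s * M :=
        Finset.sum_le_sum (fun s _ => mul_le_mul_of_nonneg_left (hd s) (hw s))
    _ = M := by rw [← Finset.sum_mul, h1, one_mul]

lemma logsumexp_diff_le {A : Type} (Ap : Finset A) (hAp : Ap.Nonempty)
    (f g : A → ℝ) (M : ℝ) (h : ∀ a ∈ Ap, f a - g a ≤ M) :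
    Real.log (∑ a ∈ Ap, Real.exp (f a)) - Real.log (∑ a ∈ Ap, Real.exp (g a)) ≤ M := by
  have hg : 0 < ∑ a ∈ Ap, Real.exp (g a) :=
    Finset.sum_pos (fun a _ => Real.exp_pos _) hAp
  have hf : 0 < ∑ a ∈ Ap, Real.exp (f a) :=
    Finset.sum_pos (fun a _ => Real.exp_pos _) hAp
  have hle : ∑ a ∈ Ap, Real.exp (f a) ≤ Real.exp M * ∑ a ∈ Ap, Real.exp (g a) := by
    rw [Finset.mul_sum]
    refine Finset.sum_le_sum (fun a ha => ?_)
    rw [← Real.exp_add]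
    exact Real.exp_le_exp.2 (by linarith [h a ha])
  have := Real.log_le_log hf hle
  rw [Real.log_mul (Real.exp_ne_zero _) (ne_of_gt hg), Real.log_exp] at this
  linarith

lemma gibbs {A : Type} (Ap : Finset A) (q Q : A → ℝ)
    (hq : ∀ a ∈ Ap, 0 < q a) (hsum : ∑ a ∈ Ap, q a = 1) :
    ∑ a ∈ Ap, q a * (Q a - Real.log (q a)) ≤ Real.log (∑ a ∈ Ap, Real.exp (Q a)) := by
  have := (strictConcaveOn_log_Ioi.concaveOn).le_map_sum
    (t := Ap) (w := q) (p := fun a => Real.exp (Q a) / q a)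
    (fun a ha => (hq a ha).le) hsum
    (fun a ha => Set.mem_Ioi.2 (div_pos (Real.exp_pos _) (hq a ha)))
  simp only [smul_eq_mul] at this
  have h1 : ∑ a ∈ Ap, q a * (Real.exp (Q a) / q a) = ∑ a ∈ Ap, Real.exp (Q a) :=
    Finset.sum_congr rfl (fun a ha => by field_simp [mul_div_cancel_left₀, ne_of_gt (hq a ha)])
  have h2 : ∀ a ∈ Ap, q a * Real.log (Real.exp (Q a) / q a) = q a * (Q a - Real.log (q a)) := by
    intro a ha
    rw [Real.log_div (Real.exp_ne_zero _) (ne_of_gt (hq a ha)), Real.log_exp]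
  rw [h1] at this
  calc ∑ a ∈ Ap, q a * (Q a - Real.log (q a))
      = ∑ a ∈ Ap, q a * Real.log (Real.exp (Q a) / q a) :=
        Finset.sum_congr rfl (fun a ha => (h2 a ha).symm)
    _ ≤ _ := this

lemma fix_le {S A : Type} [Fintype S] [Nonempty S] (Ap : Finset A) (hAp : Ap.Nonempty)
    (γ : ℝ) (hγ0 : 0 ≤ γ) (hγ1 : γ < 1) (F G : S → A → ℝ)
    (h : ∀ M, (∀ s, ∀ a ∈ Ap, F s a - G s a ≤ M) → ∀ s, ∀ a ∈ Ap, F s a - G s a ≤ γ * M) :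
    ∀ s, ∀ a ∈ Ap, F s a ≤ G s a := by
  have hT : (Finset.univ ×ˢ Ap : Finset (S × A)).Nonempty :=
    Finset.Nonempty.product Finset.univ_nonempty hAp
  set M := (Finset.univ ×ˢ Ap).sup' hT (fun x => F x.1 x.2 - G x.1 x.2) with hMdef
  have hub : ∀ s, ∀ a ∈ Ap, F s a - G s a ≤ M := by
    intro s a ha
    exact Finset.le_sup' (f := fun x : S × A => F x.1 x.2 - G x.1 x.2) (b := (s, a))
      (Finset.mem_product.2 ⟨Finset.mem_univ s, ha⟩)
  have h2 := h M hub
  have hM : M ≤ γ * M := by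
    apply Finset.sup'_le
    intro x hx
    exact h2 x.1 x.2 (Finset.mem_product.1 hx).2
  have hM0 : M ≤ 0 := by nlinarith
  intro s a ha
  linarith [hub s a ha]


/-- Proposition 3, sandwich condition: if `Q̄^{proj_p π⋆}` is the fixed
point of the top-p soft Bellman operator `B_p^{proj_p π⋆}` and `Q̄⋆_p` is the fixed
point of the top-p soft Bellman optimality operator, then
`Q̄^{proj_p π⋆}(s,a) ≤ Q̄⋆_p(s,a) ≤ Q⋆(s,a)` for all `s ∈ S`, `a ∈ A_p^⋆`. -/
theorem sandwich_condition
    {S A : Type} [Fintype S] [Fintype A] [Nonempty S] [Nonempty A]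
    (P : S → A → S → ℝ)
    (hP0 : ∀ s a s', 0 ≤ P s a s')
    (hP1 : ∀ s a, ∑ s', P s a s' = 1)
    (r : S → A → ℝ) (γ : ℝ) (hγ0 : 0 ≤ γ) (hγ1 : γ < 1)
    (Qstar : S → A → ℝ)
    (hQstar : ∀ s a, Qstar s a = r s a + γ * ∑ s', P s a s' *
        Real.log (∑ a', Real.exp (Qstar s' a')))
    (πstar : S → A → ℝ)
    (hπstar : ∀ s a, πstar s a = Real.exp (Qstar s a) / ∑ b, Real.exp (Qstar s b))
    (p : ℝ) (hp0 : 0 < p) (hp1 : p ≤ 1)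
    (Ap : Finset A) (hAp : Ap.Nonempty)
    (hmass : ∀ s, ∑ a ∈ Ap, πstar s a = p)
    (htop : ∀ s, ∀ a ∈ Ap, ∀ b ∉ Ap, πstar s b ≤ πstar s a)
    (proj : S → A → ℝ)
    (hproj : ∀ s, ∀ a ∈ Ap, proj s a = πstar s a / p)
    (Qbar : S → A → ℝ)
    (hQbar : ∀ s, ∀ a ∈ Ap, Qbar s a = r s a + γ * ∑ s', P s a s' *
        ∑ a' ∈ Ap, proj s' a' * (Qbar s' a' - Real.log (proj s' a')))
    (QbarStar : S → A → ℝ)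
    (hQbarStar : ∀ s, ∀ a ∈ Ap, QbarStar s a = r s a + γ * ∑ s', P s a s' *
        Real.log (∑ a' ∈ Ap, Real.exp (QbarStar s' a'))) :
    ∀ s, ∀ a ∈ Ap, Qbar s a ≤ QbarStar s a ∧ QbarStar s a ≤ Qstar s a := by
  -- positivity and normalization of the projected policy
  have hπpos : ∀ s b, 0 < πstar s b := fun s b => by
    rw [hπstar]
    exact div_pos (Real.exp_pos _)
      (Finset.sum_pos (fun _ _ => Real.exp_pos _) Finset.univ_nonempty)
  have hprojpos : ∀ s, ∀ a ∈ Ap, 0 < proj s a := fun s a ha => by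
    rw [hproj s a ha]; exact div_pos (hπpos s a) hp0
  have hprojsum : ∀ s, ∑ a ∈ Ap, proj s a = 1 := fun s => by
    rw [Finset.sum_congr rfl (fun a ha => hproj s a ha), ← Finset.sum_div, hmass,
      div_self (ne_of_gt hp0)]
  -- second inequality: QbarStar ≤ Qstar
  have hB : ∀ s, ∀ a ∈ Ap, QbarStar s a ≤ Qstar s a := by
    apply fix_le Ap hAp γ hγ0 hγ1
    intro M hM s a ha
    rw [hQbarStar s a ha, hQstar s a]
    have key : ∀ s', Real.log (∑ a' ∈ Ap, Real.exp (QbarStar s' a')) -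
        Real.log (∑ a', Real.exp (Qstar s' a')) ≤ M := by
      intro s'
      have h1 := logsumexp_diff_le Ap hAp (QbarStar s') (Qstar s') M
        (fun a' ha' => hM s' a' ha')
      have hpos : 0 < ∑ a' ∈ Ap, Real.exp (Qstar s' a') :=
        Finset.sum_pos (fun _ _ => Real.exp_pos _) hAp
      have h2 : Real.log (∑ a' ∈ Ap, Real.exp (Qstar s' a')) ≤
          Real.log (∑ a', Real.exp (Qstar s' a')) :=
        Real.log_le_log hpos (Finset.sum_le_sum_of_subset_of_nonneg (Finset.subset_univ Ap)
          (fun _ _ _ => (Real.exp_pos _).le))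
      linarith
    have hD : (∑ s', P s a s' * Real.log (∑ a' ∈ Ap, Real.exp (QbarStar s' a'))) -
        (∑ s', P s a s' * Real.log (∑ a', Real.exp (Qstar s' a'))) ≤ M := by
      rw [← Finset.sum_sub_distrib]
      calc ∑ s', (P s a s' * _ - P s a s' * _)
          = ∑ s', P s a s' * (Real.log (∑ a' ∈ Ap, Real.exp (QbarStar s' a')) -
              Real.log (∑ a', Real.exp (Qstar s' a'))) :=
            Finset.sum_congr rfl (fun s' _ => (mul_sub _ _ _).symm)
        _ ≤ M := wsum_le (P s a) _ M (hP0 s a) (hP1 s a) key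
    nlinarith [mul_le_mul_of_nonneg_left hD hγ0]
  -- first inequality: Qbar ≤ QbarStar
  have hA : ∀ s, ∀ a ∈ Ap, Qbar s a ≤ QbarStar s a := by
    apply fix_le Ap hAp γ hγ0 hγ1
    intro M hM s a ha
    rw [hQbar s a ha, hQbarStar s a ha]
    have key : ∀ s', (∑ a' ∈ Ap, proj s' a' * (Qbar s' a' - Real.log (proj s' a'))) -
        Real.log (∑ a' ∈ Ap, Real.exp (QbarStar s' a')) ≤ M := by
      intro s'
      have h1 := gibbs Ap (proj s') (Qbar s') (hprojpos s') (hprojsum s')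
      have h2 := logsumexp_diff_le Ap hAp (Qbar s') (QbarStar s') M
        (fun a' ha' => hM s' a' ha')
      linarith
    have hD : (∑ s', P s a s' *
          ∑ a' ∈ Ap, proj s' a' * (Qbar s' a' - Real.log (proj s' a'))) -
        (∑ s', P s a s' * Real.log (∑ a' ∈ Ap, Real.exp (QbarStar s' a'))) ≤ M := by
      rw [← Finset.sum_sub_distrib]
      calc ∑ s', (P s a s' * _ - P s a s' * _)
          = ∑ s', P s a s' *
              ((∑ a' ∈ Ap, proj s' a' * (Qbar s' a' - Real.log (proj s' a'))) -
                Real.log (∑ a' ∈ Ap, Real.exp (QbarStar s' a'))) :=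
            Finset.sum_congr rfl (fun s' _ => (mul_sub _ _ _).symm)
        _ ≤ M := wsum_le (P s a) _ M (hP0 s a) (hP1 s a) key
    nlinarith [mul_le_mul_of_nonneg_left hD hγ0]
  exact fun s a ha => ⟨hA s a ha, hB s a ha⟩
end

section
/- Proposition 4 (bounded sub-optimality of the top-p MDP): let Q̄⋆_p : S × A_p^⋆ → ℝ be the fixed point of the top-p soft Bellman optimality operator. Then ‖Q⋆ − Q̄⋆_p‖_{∞,A_p^⋆} = max_{s∈S} max_{a∈A_p^⋆} |Q⋆(s,a) − Q̄⋆_p(s,a)| ≤ κ(p), where κ(p) = −(γ/(1−γ)) log p. -/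
/-- Log-sum-exp is 1-Lipschitz in the sup norm. -/
lemma lse_lip_aux {A : Type} (Ap : Finset A) (hAp : Ap.Nonempty) (f g : A → ℝ) (M : ℝ)
    (h : ∀ a ∈ Ap, |f a - g a| ≤ M) :
    |Real.log (∑ a ∈ Ap, Real.exp (f a)) - Real.log (∑ a ∈ Ap, Real.exp (g a))| ≤ M := by
  have hpos : ∀ (u : A → ℝ), 0 < ∑ a ∈ Ap, Real.exp (u a) := fun u =>
    Finset.sum_pos (fun a _ => Real.exp_pos _) hAp
  have key : ∀ (u v : A → ℝ), (∀ a ∈ Ap, u a - v a ≤ M) →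
      Real.log (∑ a ∈ Ap, Real.exp (u a)) - Real.log (∑ a ∈ Ap, Real.exp (v a)) ≤ M := by
    intro u v huv
    have h1 : ∑ a ∈ Ap, Real.exp (u a) ≤ Real.exp M * ∑ a ∈ Ap, Real.exp (v a) := by
      rw [Finset.mul_sum]
      refine Finset.sum_le_sum fun a ha => ?_
      rw [← Real.exp_add]
      exact Real.exp_le_exp.2 (by linarith [huv a ha])
    have hlog := Real.log_le_log (hpos u) h1
    rw [Real.log_mul (Real.exp_ne_zero M) (ne_of_gt (hpos v)), Real.log_exp] at hlog
    linarith
  rw [abs_sub_le_iff]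
  exact ⟨key f g fun a ha => (abs_le.1 (h a ha)).2,
         key g f fun a ha => by linarith [(abs_le.1 (h a ha)).1]⟩

/-- Proposition 4, bounded sub-optimality of the top-p MDP: if `Q̄⋆_p`
is the fixed point of the top-p soft Bellman optimality operator, then
`‖Q⋆ − Q̄⋆_p‖_{∞,A_p^⋆} ≤ κ(p) = −(γ/(1−γ)) log p`. -/
theorem bounded_suboptimality_topP
    {S A : Type} [Fintype S] [Fintype A] [Nonempty S] [Nonempty A]
    (P : S → A → S → ℝ)
    (hP0 : ∀ s a s', 0 ≤ P s a s')
    (hP1 : ∀ s a, ∑ s', P s a s' = 1)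
    (r : S → A → ℝ) (γ : ℝ) (hγ0 : 0 ≤ γ) (hγ1 : γ < 1)
    (Qstar : S → A → ℝ)
    (hQstar : ∀ s a, Qstar s a = r s a + γ * ∑ s', P s a s' *
        Real.log (∑ a', Real.exp (Qstar s' a')))
    (πstar : S → A → ℝ)
    (hπstar : ∀ s a, πstar s a = Real.exp (Qstar s a) / ∑ b, Real.exp (Qstar s b))
    (p : ℝ) (hp0 : 0 < p) (hp1 : p ≤ 1)
    (Ap : Finset A) (hAp : Ap.Nonempty)
    (hmass : ∀ s, ∑ a ∈ Ap, πstar s a = p)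
    (htop : ∀ s, ∀ a ∈ Ap, ∀ b ∉ Ap, πstar s b ≤ πstar s a)
    (QbarStar : S → A → ℝ)
    (hQbarStar : ∀ s, ∀ a ∈ Ap, QbarStar s a = r s a + γ * ∑ s', P s a s' *
        Real.log (∑ a' ∈ Ap, Real.exp (QbarStar s' a'))) :
    (Finset.univ.sup' Finset.univ_nonempty fun s =>
        Ap.sup' hAp fun a => |Qstar s a - QbarStar s a|)
      ≤ -(γ / (1 - γ)) * Real.log p := by
  set M := (Finset.univ.sup' Finset.univ_nonempty fun s =>
      Ap.sup' hAp fun a => |Qstar s a - QbarStar s a|) with hMdef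
  have hlogp : Real.log p ≤ 0 := Real.log_nonpos (le_of_lt hp0) hp1
  have hden : ∀ s : S, (0 : ℝ) < ∑ b, Real.exp (Qstar s b) :=
    fun s => Finset.sum_pos (fun b _ => Real.exp_pos _) Finset.univ_nonempty
  -- the top-p mass of exp(Q⋆) is p times the total mass
  have hsum : ∀ s : S, ∑ a ∈ Ap, Real.exp (Qstar s a) = p * ∑ b, Real.exp (Qstar s b) := by
    intro s
    have h1 : (∑ a ∈ Ap, Real.exp (Qstar s a)) / (∑ b, Real.exp (Qstar s b)) = p := by
      rw [← hmass s, Finset.sum_div]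
      exact Finset.sum_congr rfl fun a _ => (hπstar s a).symm
    exact (div_eq_iff (ne_of_gt (hden s))).1 h1
  -- pointwise bound on the difference of the log-partition functions
  have hD : ∀ s' : S,
      |Real.log (∑ a', Real.exp (Qstar s' a')) -
        Real.log (∑ a' ∈ Ap, Real.exp (QbarStar s' a'))| ≤ M - Real.log p := by
    intro s'
    have hMs : ∀ a ∈ Ap, |Qstar s' a - QbarStar s' a| ≤ M := by
      intro a ha
      refine le_trans (Finset.le_sup' (fun a => |Qstar s' a - QbarStar s' a|) ha) ?_
      exact Finset.le_sup' (fun s => Ap.sup' hAp fun a => |Qstar s a - QbarStar s a|)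
        (Finset.mem_univ s')
    have hlse := lse_lip_aux Ap hAp (Qstar s') (QbarStar s') M hMs
    have hlog : Real.log (∑ a' ∈ Ap, Real.exp (Qstar s' a')) =
        Real.log p + Real.log (∑ a', Real.exp (Qstar s' a')) := by
      rw [hsum s', Real.log_mul (ne_of_gt hp0) (ne_of_gt (hden s'))]
    have hre : Real.log (∑ a', Real.exp (Qstar s' a')) -
        Real.log (∑ a' ∈ Ap, Real.exp (QbarStar s' a'))
        = (Real.log (∑ a' ∈ Ap, Real.exp (Qstar s' a')) -
            Real.log (∑ a' ∈ Ap, Real.exp (QbarStar s' a'))) + (-Real.log p) := by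
      rw [hlog]; ring
    rw [hre]
    refine le_trans (abs_add_le _ _) ?_
    have habs : |(-Real.log p)| = -Real.log p := abs_of_nonneg (by linarith)
    rw [habs]
    linarith
  -- the fixed-point equations give M ≤ γ (M − log p)
  have hkey : M ≤ γ * (M - Real.log p) := by
    rw [hMdef]
    apply Finset.sup'_le
    intro s _
    apply Finset.sup'_le
    intro a ha
    have heq : Qstar s a - QbarStar s a = γ * ∑ s', P s a s' *
        (Real.log (∑ a', Real.exp (Qstar s' a')) -
          Real.log (∑ a' ∈ Ap, Real.exp (QbarStar s' a'))) := by
      rw [hQstar s a, hQbarStar s a ha]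
      have hsplit : ∑ s', P s a s' * (Real.log (∑ a', Real.exp (Qstar s' a')) -
          Real.log (∑ a' ∈ Ap, Real.exp (QbarStar s' a')))
          = (∑ s', P s a s' * Real.log (∑ a', Real.exp (Qstar s' a'))) -
            ∑ s', P s a s' * Real.log (∑ a' ∈ Ap, Real.exp (QbarStar s' a')) := by
        rw [← Finset.sum_sub_distrib]
        exact Finset.sum_congr rfl fun _ _ => by ring
      rw [hsplit]; ring
    rw [heq, abs_mul, abs_of_nonneg hγ0]
    have hb : |∑ s', P s a s' * (Real.log (∑ a', Real.exp (Qstar s' a')) -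
        Real.log (∑ a' ∈ Ap, Real.exp (QbarStar s' a')))| ≤ M - Real.log p := by
      calc |∑ s', P s a s' * (Real.log (∑ a', Real.exp (Qstar s' a')) -
            Real.log (∑ a' ∈ Ap, Real.exp (QbarStar s' a')))|
          ≤ ∑ s', |P s a s' * (Real.log (∑ a', Real.exp (Qstar s' a')) -
            Real.log (∑ a' ∈ Ap, Real.exp (QbarStar s' a')))| :=
            Finset.abs_sum_le_sum_abs _ _
        _ ≤ ∑ s', P s a s' * (M - Real.log p) := by
            refine Finset.sum_le_sum fun s' _ => ?_
            rw [abs_mul, abs_of_nonneg (hP0 s a s')]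
            exact mul_le_mul_of_nonneg_left (hD s') (hP0 s a s')
        _ = M - Real.log p := by rw [← Finset.sum_mul, hP1, one_mul]
    exact mul_le_mul_of_nonneg_left hb hγ0
  -- conclude
  have h1γ : (0 : ℝ) < 1 - γ := by linarith
  have hfinal : M ≤ (-(γ * Real.log p)) / (1 - γ) := by
    rw [le_div_iff₀ h1γ]
    nlinarith [hkey]
  calc M ≤ (-(γ * Real.log p)) / (1 - γ) := hfinal
    _ = -(γ / (1 - γ)) * Real.log p := by ring
end

section
/- Soft policy evaluation is dominated by soft optimality: let π be any policy with π(a|s) > 0 for all s ∈ S and a ∈ A_p and Σ_{a∈A_p} π(a|s) = 1 (so that proj_p(π) = π on A_p), let Q̄^π : S × A_p → ℝ be the fixed point of the top-p soft Bellman operator B_p^π, and let Q̄⋆_p : S × A_p → ℝ be the fixed point of the top-p soft Bellman optimality operator (T Q)(s,a) = r(s,a) + γ Σ_{s'∈S} P(s'|s,a) · log Σ_{a'∈A_p} exp(Q(s',a')). Then Q̄^π(s,a) ≤ Q̄⋆_p(s,a) for all s ∈ S and a ∈ A_p. -/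
/-!
Write `D = Q̄^π - Q̄⋆_p` and let `M` be its maximum over `S × A_p`. By the Gibbs variational
inequality the soft value `Σ π (Q - log π)` of any `Q` is at most `log Σ exp Q`, and raising
`Q` by at most `M` raises `log Σ exp Q` by at most `M`, so subtracting the two Bellman
equations gives `D ≤ γ M` everywhere. Hence `M ≤ γ M`, i.e. `M ≤ 0`.
-/

open Finset

section

variable {ι : Type*} {s : Finset ι}

namespace Real

/-- Gibbs variational inequality, from Jensen for `exp` at the points `x i - log (p i)`. -/
theorem sum_mul_sub_log_le_log_sum_exp {p x : ι → ℝ} (hp : ∀ i ∈ s, 0 < p i)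
    (hp1 : ∑ i ∈ s, p i = 1) :
    ∑ i ∈ s, p i * (x i - log (p i)) ≤ log (∑ i ∈ s, exp (x i)) := by
  have jensen : exp (∑ i ∈ s, p i • (x i - log (p i))) ≤
      ∑ i ∈ s, p i • exp (x i - log (p i)) :=
    convexOn_exp.map_sum_le (fun i hi => (hp i hi).le) hp1 (fun _ _ => Set.mem_univ _)
  have weights_cancel : ∑ i ∈ s, p i • exp (x i - log (p i)) = ∑ i ∈ s, exp (x i) :=
    sum_congr rfl fun i hi => by
      rw [smul_eq_mul, exp_sub, exp_log (hp i hi)]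
      field_simp [(hp i hi).ne']
  rw [weights_cancel] at jensen
  rw [← log_exp (∑ i ∈ s, p i * _)]
  exact log_le_log (exp_pos _) (by simpa only [smul_eq_mul] using jensen)

theorem log_sum_exp_le_add_log_sum_exp {x y : ι → ℝ} {c : ℝ} (hs : s.Nonempty)
    (hxy : ∀ i ∈ s, x i ≤ y i + c) :
    log (∑ i ∈ s, exp (x i)) ≤ c + log (∑ i ∈ s, exp (y i)) := by
  have hpos : ∀ z : ι → ℝ, 0 < ∑ i ∈ s, exp (z i) := fun _ =>
    sum_pos (fun _ _ => exp_pos _) hs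
  calc log (∑ i ∈ s, exp (x i))
      ≤ log (∑ i ∈ s, exp (y i + c)) :=
        log_le_log (hpos x) (sum_le_sum fun i hi => exp_le_exp.2 (hxy i hi))
    _ = log (exp c * ∑ i ∈ s, exp (y i)) := by simp only [exp_add, mul_sum, mul_comm]
    _ = c + log (∑ i ∈ s, exp (y i)) := by rw [log_mul (exp_pos c).ne' (hpos y).ne', log_exp]

end Real

theorem Finset.sum_mul_le_of_le {w f : ι → ℝ} {M : ℝ}
    (hw : ∀ i ∈ s, 0 ≤ w i) (hw1 : ∑ i ∈ s, w i = 1) (hf : ∀ i ∈ s, f i ≤ M) :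
    ∑ i ∈ s, w i * f i ≤ M :=
  calc ∑ i ∈ s, w i * f i ≤ ∑ i ∈ s, w i * M :=
        sum_le_sum fun i hi => mul_le_mul_of_nonneg_left (hf i hi) (hw i hi)
    _ = M := by rw [← sum_mul, hw1, one_mul]

theorem Finset.nonpos_of_forall_le_mul_of_le {f : ι → ℝ} {γ : ℝ}
    (hγ : γ < 1) (h : ∀ M, (∀ i ∈ s, f i ≤ M) → ∀ i ∈ s, f i ≤ γ * M) :
    ∀ i ∈ s, f i ≤ 0 := by
  intro i hi
  have hs : s.Nonempty := ⟨i, hi⟩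
  have hmax : ∀ j ∈ s, f j ≤ s.sup' hs f := fun j hj => le_sup' f hj
  obtain ⟨j, hj, hfj⟩ := exists_mem_eq_sup' hs f
  have : s.sup' hs f ≤ γ * s.sup' hs f := hfj ▸ h _ hmax j hj
  nlinarith [hmax i hi]

end

theorem soft_policy_evaluation_le_optimality_general
    {S A : Type} [Fintype S]
    (P : S → A → S → ℝ)
    (hP0 : ∀ s a s', 0 ≤ P s a s')
    (hP1 : ∀ s a, ∑ s', P s a s' = 1)
    (r : S → A → ℝ) (γ : ℝ) (hγ0 : 0 ≤ γ) (hγ1 : γ < 1)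
    (Ap : Finset A) (hAp : Ap.Nonempty)
    (π : S → A → ℝ)
    (hπpos : ∀ s, ∀ a ∈ Ap, 0 < π s a)
    (hπ1 : ∀ s, ∑ a ∈ Ap, π s a = 1)
    (Qπ : S → A → ℝ)
    (hQπ : ∀ s, ∀ a ∈ Ap, Qπ s a = r s a + γ * ∑ s', P s a s' *
        ∑ a' ∈ Ap, π s' a' * (Qπ s' a' - Real.log (π s' a')))
    (QbarStar : S → A → ℝ)
    (hQbarStar : ∀ s, ∀ a ∈ Ap, QbarStar s a = r s a + γ * ∑ s', P s a s' *
        Real.log (∑ a' ∈ Ap, Real.exp (QbarStar s' a'))) :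
    ∀ s, ∀ a ∈ Ap, Qπ s a ≤ QbarStar s a := by
  have contraction : ∀ M, (∀ q ∈ univ ×ˢ Ap, Qπ q.1 q.2 - QbarStar q.1 q.2 ≤ M) →
      ∀ q ∈ univ ×ˢ Ap, Qπ q.1 q.2 - QbarStar q.1 q.2 ≤ γ * M := by
    rintro M hM ⟨s, a⟩ hq
    have ha : a ∈ Ap := (mem_product.1 hq).2
    have value_gap : ∀ s', ∑ a' ∈ Ap, π s' a' * (Qπ s' a' - Real.log (π s' a')) -
        Real.log (∑ a' ∈ Ap, Real.exp (QbarStar s' a')) ≤ M := fun s' => by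
      have gibbs := Real.sum_mul_sub_log_le_log_sum_exp (x := Qπ s') (hπpos s') (hπ1 s')
      have shift := Real.log_sum_exp_le_add_log_sum_exp hAp fun a' ha' =>
        sub_le_iff_le_add'.1 (hM (s', a') (mem_product.2 ⟨mem_univ _, ha'⟩))
      linarith
    calc Qπ s a - QbarStar s a
        = γ * ∑ s', P s a s' * (∑ a' ∈ Ap, π s' a' * (Qπ s' a' - Real.log (π s' a')) -
            Real.log (∑ a' ∈ Ap, Real.exp (QbarStar s' a'))) := by
          rw [hQπ s a ha, hQbarStar s a ha]
          simp only [mul_sub, sum_sub_distrib]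
          ring
      _ ≤ γ * M := mul_le_mul_of_nonneg_left
          (sum_mul_le_of_le (fun s' _ => hP0 s a s') (hP1 s a) fun s' _ => value_gap s') hγ0
  intro s a ha
  exact sub_nonpos.1 <|
    nonpos_of_forall_le_mul_of_le hγ1 contraction (s, a) (mem_product.2 ⟨mem_univ _, ha⟩)

/-- Soft policy evaluation is dominated by soft optimality: for any
policy `π` supported on `A_p` (i.e. `π(a|s) > 0` on `A_p` and `Σ_{a∈A_p} π(a|s) = 1`),
the fixed point `Q̄^π` of the top-p soft Bellman operator `B_p^π` satisfies
`Q̄^π(s,a) ≤ Q̄⋆_p(s,a)` for all `s ∈ S`, `a ∈ A_p`, where `Q̄⋆_p` is the fixed point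
of the top-p soft Bellman optimality operator. -/
theorem soft_policy_evaluation_le_optimality
    {S A : Type} [Fintype S] [Fintype A] [Nonempty S] [Nonempty A]
    (P : S → A → S → ℝ)
    (hP0 : ∀ s a s', 0 ≤ P s a s')
    (hP1 : ∀ s a, ∑ s', P s a s' = 1)
    (r : S → A → ℝ) (γ : ℝ) (hγ0 : 0 ≤ γ) (hγ1 : γ < 1)
    (Ap : Finset A) (hAp : Ap.Nonempty)
    (π : S → A → ℝ)
    (hπpos : ∀ s, ∀ a ∈ Ap, 0 < π s a)
    (hπ1 : ∀ s, ∑ a ∈ Ap, π s a = 1)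
    (Qπ : S → A → ℝ)
    (hQπ : ∀ s, ∀ a ∈ Ap, Qπ s a = r s a + γ * ∑ s', P s a s' *
        ∑ a' ∈ Ap, π s' a' * (Qπ s' a' - Real.log (π s' a')))
    (QbarStar : S → A → ℝ)
    (hQbarStar : ∀ s, ∀ a ∈ Ap, QbarStar s a = r s a + γ * ∑ s', P s a s' *
        Real.log (∑ a' ∈ Ap, Real.exp (QbarStar s' a'))) :
    ∀ s, ∀ a ∈ Ap, Qπ s a ≤ QbarStar s a :=
  soft_policy_evaluation_le_optimality_general P hP0 hP1 r γ hγ0 hγ1 Ap hAp π hπpos hπ1 Qπ hQπ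
    QbarStar hQbarStar
end
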